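/- Let u : ℝ × ℝ → ℝ be a smooth solution of the mKdV equation u_t + u²u_x + u_xxx = 0 that is L-periodic in space for some L > 0. Then the global energy is a conserved invariant: the function t ↦ ∫₀ᴸ ( u(x,t)⁴/12 + (1/2)·u(x,t)·u_xx(x,t) ) dx is constant. -/

import Mathlib

noncomputable section

/-- Partial derivative of `u(x,t)` with respect to `x`. -/
def ux (u : ℝ × ℝ → ℝ) (x t : ℝ) : ℝ := deriv (fun y => u (y, t)) x

/-- Second partial derivative of `u(x,t)` with respect to `x`. -/
def uxx (u : ℝ × ℝ → ℝ) (x t : ℝ) : ℝ := deriv (fun y => ux u y t) x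

/-- Third partial derivative of `u(x,t)` with respect to `x`. -/
def uxxx (u : ℝ × ℝ → ℝ) (x t : ℝ) : ℝ := deriv (fun y => uxx u y t) x

/-- Partial derivative of `u(x,t)` with respect to `t`. -/
def ut (u : ℝ × ℝ → ℝ) (x t : ℝ) : ℝ := deriv (fun s => u (x, s)) t


namespace MKdVAux

open MeasureTheory Set


open MeasureTheory Set

/-- Directional partial derivative. -/
def pd (v : ℝ × ℝ) (f : ℝ × ℝ → ℝ) : ℝ × ℝ → ℝ := fun p => fderiv ℝ f p v

lemma contDiff_pd (v : ℝ × ℝ) {f : ℝ × ℝ → ℝ} (hf : ContDiff ℝ (⊤ : ℕ∞) f) :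
    ContDiff ℝ (⊤ : ℕ∞) (pd v f) :=
  (hf.fderiv_right (by simp)).clm_apply contDiff_const

lemma hasDerivAt_slice_x {f : ℝ × ℝ → ℝ} (hf : Differentiable ℝ f) (x t : ℝ) :
    HasDerivAt (fun y => f (y, t)) (pd (1, 0) f (x, t)) x := by
  have h := (hf (x, t)).hasFDerivAt.comp_hasDerivAt x
      ((hasDerivAt_id x).prodMk (hasDerivAt_const x t))
  simp only [Function.comp_def] at h
  exact h

lemma hasDerivAt_slice_t {f : ℝ × ℝ → ℝ} (hf : Differentiable ℝ f) (x t : ℝ) :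
    HasDerivAt (fun s => f (x, s)) (pd (0, 1) f (x, t)) t := by
  have h := (hf (x, t)).hasFDerivAt.comp_hasDerivAt t
      ((hasDerivAt_const t x).prodMk (hasDerivAt_id t))
  simp only [Function.comp_def] at h
  exact h

lemma deriv_slice_x {f : ℝ × ℝ → ℝ} (hf : Differentiable ℝ f) (x t : ℝ) :
    deriv (fun y => f (y, t)) x = pd (1, 0) f (x, t) :=
  (hasDerivAt_slice_x hf x t).deriv

lemma deriv_slice_t {f : ℝ × ℝ → ℝ} (hf : Differentiable ℝ f) (x t : ℝ) :
    deriv (fun s => f (x, s)) t = pd (0, 1) f (x, t) :=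
  (hasDerivAt_slice_t hf x t).deriv

lemma pd_add (v : ℝ × ℝ) {f g : ℝ × ℝ → ℝ} (hf : Differentiable ℝ f)
    (hg : Differentiable ℝ g) (p : ℝ × ℝ) :
    pd v (fun q => f q + g q) p = pd v f p + pd v g p := by
  simp only [pd, fderiv_fun_add (hf p) (hg p), ContinuousLinearMap.add_apply]

lemma pd_sub (v : ℝ × ℝ) {f g : ℝ × ℝ → ℝ} (hf : Differentiable ℝ f)
    (hg : Differentiable ℝ g) (p : ℝ × ℝ) :
    pd v (fun q => f q - g q) p = pd v f p - pd v g p := by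
  simp only [pd, fderiv_fun_sub (hf p) (hg p), ContinuousLinearMap.sub_apply]

lemma pd_neg (v : ℝ × ℝ) {f : ℝ × ℝ → ℝ} (p : ℝ × ℝ) :
    pd v (fun q => -f q) p = -pd v f p := by
  simp only [pd, fderiv_fun_neg, ContinuousLinearMap.neg_apply]

lemma pd_mul (v : ℝ × ℝ) {f g : ℝ × ℝ → ℝ} (hf : Differentiable ℝ f)
    (hg : Differentiable ℝ g) (p : ℝ × ℝ) :
    pd v (fun q => f q * g q) p = f p * pd v g p + g p * pd v f p := by
  simp only [pd, fderiv_fun_mul (hf p) (hg p), ContinuousLinearMap.add_apply,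
    ContinuousLinearMap.smul_apply, smul_eq_mul]

lemma pd_const (v : ℝ × ℝ) (c : ℝ) (p : ℝ × ℝ) :
    pd v (fun _ => c) p = 0 := by
  simp [pd]

lemma pd_const_mul (v : ℝ × ℝ) {f : ℝ × ℝ → ℝ} (hf : Differentiable ℝ f) (c : ℝ) (p : ℝ × ℝ) :
    pd v (fun q => c * f q) p = c * pd v f p := by
  simp only [pd, fderiv_const_mul (hf p) c, ContinuousLinearMap.smul_apply, smul_eq_mul]

lemma pd_pow (v : ℝ × ℝ) {f : ℝ × ℝ → ℝ} (hf : Differentiable ℝ f) (n : ℕ) (p : ℝ × ℝ) :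
    pd v (fun q => f q ^ n) p = n * f p ^ (n - 1) * pd v f p := by
  induction n with
  | zero => simpa using pd_const v 1 p
  | succ n ih =>
      have h : (fun q => f q ^ (n + 1)) = fun q => f q ^ n * f q := by
        funext q; ring
      rw [h, pd_mul v (f := fun q => f q ^ n) (hf.pow n) hf, ih]
      rcases n with _ | n
      · simp
      · have : n + 1 + 1 - 1 = n + 1 := rfl
        rw [this, Nat.add_sub_cancel]
        push_cast
        ring

lemma pd_periodic (v : ℝ × ℝ) {f : ℝ × ℝ → ℝ} (hf : Differentiable ℝ f) {c : ℝ × ℝ}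
    (h : ∀ p, f (p + c) = f p) (p : ℝ × ℝ) :
    pd v f (p + c) = pd v f p := by
  have h1 : HasFDerivAt (fun q : ℝ × ℝ => f (q + c)) (fderiv ℝ f (p + c)) p := by
    have := (hf (p + c)).hasFDerivAt.comp p ((hasFDerivAt_id p).add_const c)
    simpa [Function.comp_def] using this
  have h2 : (fun q : ℝ × ℝ => f (q + c)) = f := funext h
  rw [h2] at h1
  show fderiv ℝ f (p + c) v = fderiv ℝ f p v
  rw [h1.fderiv]

lemma pd_swap {f : ℝ × ℝ → ℝ} (hf : ContDiff ℝ (⊤ : ℕ∞) f) (a b : ℝ × ℝ) (p : ℝ × ℝ) :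
    pd b (pd a f) p = pd a (pd b f) p := by
  have hd : Differentiable ℝ (fderiv ℝ f) :=
    (hf.fderiv_right (m := (⊤ : ℕ∞)) (by simp)).differentiable (by simp)
  have h1 : ∀ v w : ℝ × ℝ, pd w (pd v f) p = fderiv ℝ (fderiv ℝ f) p w v := by
    intro v w
    show fderiv ℝ (fun q => (fderiv ℝ f q) v) p w = _
    rw [fderiv_clm_apply (hd p) (differentiableAt_const v)]
    simp
  rw [h1, h1]
  exact (hf.contDiffAt.isSymmSndFDerivAt (by simp [minSmoothness_of_isRCLikeNormedField]; exact WithTop.coe_le_coe.mpr le_top)).eq b a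



open MeasureTheory Set


def v1 (u : ℝ × ℝ → ℝ) : ℝ × ℝ → ℝ := pd (1, 0) u
def v2 (u : ℝ × ℝ → ℝ) : ℝ × ℝ → ℝ := pd (1, 0) (v1 u)
def v3 (u : ℝ × ℝ → ℝ) : ℝ × ℝ → ℝ := pd (1, 0) (v2 u)
def v4 (u : ℝ × ℝ → ℝ) : ℝ × ℝ → ℝ := pd (1, 0) (v3 u)
def v5 (u : ℝ × ℝ → ℝ) : ℝ × ℝ → ℝ := pd (1, 0) (v4 u)
def w (u : ℝ × ℝ → ℝ) : ℝ × ℝ → ℝ := pd (0, 1) u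

def EnergyG (u : ℝ × ℝ → ℝ) : ℝ × ℝ → ℝ :=
  fun p => (1 / 12 : ℝ) * u p ^ 4 + (1 / 2 : ℝ) * u p * v2 u p

def FluxF (u : ℝ × ℝ → ℝ) : ℝ × ℝ → ℝ :=
  fun p => -((1 / 18 : ℝ) * u p ^ 6) - (1 / 2 : ℝ) * v2 u p ^ 2 - (1 / 2 : ℝ) * u p * v4 u p
    + (1 / 2 : ℝ) * v1 u p * v3 u p - (5 / 6 : ℝ) * u p ^ 3 * v2 u p
    - (1 / 2 : ℝ) * u p ^ 2 * v1 u p ^ 2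

section Main

variable {u : ℝ × ℝ → ℝ} (hu : ContDiff ℝ (⊤ : ℕ∞) u)

theorem key_calc (hu : ContDiff ℝ (⊤ : ℕ∞) u)
    (hw_eq : w u = fun p => -(u p ^ 2 * v1 u p) - v3 u p) :
    ∀ p, pd (0, 1) (EnergyG u) p = pd (1, 0) (FluxF u) p := by
  have hv1 : ContDiff ℝ (⊤ : ℕ∞) (v1 u) := contDiff_pd _ hu
  have hv2 : ContDiff ℝ (⊤ : ℕ∞) (v2 u) := contDiff_pd _ hv1
  have hv3 : ContDiff ℝ (⊤ : ℕ∞) (v3 u) := contDiff_pd _ hv2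
  have hv4 : ContDiff ℝ (⊤ : ℕ∞) (v4 u) := contDiff_pd _ hv3
  have hv5 : ContDiff ℝ (⊤ : ℕ∞) (v5 u) := contDiff_pd _ hv4
  have hw : ContDiff ℝ (⊤ : ℕ∞) (w u) := contDiff_pd _ hu
  have hud : Differentiable ℝ u := hu.differentiable (by simp)
  have hd1 : Differentiable ℝ (v1 u) := hv1.differentiable (by simp)
  have hd2 : Differentiable ℝ (v2 u) := hv2.differentiable (by simp)
  have hd3 : Differentiable ℝ (v3 u) := hv3.differentiable (by simp)
  have hd4 : Differentiable ℝ (v4 u) := hv4.differentiable (by simp)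
  have hd5 : Differentiable ℝ (v5 u) := hv5.differentiable (by simp)
  have hdw : Differentiable ℝ (w u) := hw.differentiable (by simp)
  -- first x-derivative of w
  have hW1 : ∀ p, pd (1, 0) (w u) p
      = -(2 * u p * v1 u p ^ 2 + u p ^ 2 * v2 u p) - v4 u p := by
    intro p
    rw [hw_eq]
    simp (disch := fun_prop) only [pd_sub, pd_neg, pd_mul, pd_pow, pd_const]
    simp only [v1, v2, v3, v4, v5, w]
    norm_num
    ring
  have hW1f : pd (1, 0) (w u) = fun p =>
      -(2 * u p * v1 u p ^ 2 + u p ^ 2 * v2 u p) - v4 u p := funext hW1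
  -- second x-derivative of w
  have hW2 : ∀ p, pd (1, 0) (pd (1, 0) (w u)) p
      = -(2 * v1 u p ^ 3 + 6 * u p * v1 u p * v2 u p + u p ^ 2 * v3 u p) - v5 u p := by
    intro p
    rw [hW1f]
    simp (disch := fun_prop) only [pd_sub, pd_neg, pd_add, pd_mul, pd_pow, pd_const_mul, pd_const]
    simp only [v1, v2, v3, v4, v5, w]
    norm_num
    ring
  -- Clairaut swaps
  have hswap2 : ∀ p, pd (0, 1) (v2 u) p = pd (1, 0) (pd (1, 0) (w u)) p := by
    intro p
    have s1 : pd (0, 1) (v1 u) = pd (1, 0) (w u) := by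
      funext q
      exact pd_swap hu (1, 0) (0, 1) q
    show pd (0, 1) (pd (1, 0) (v1 u)) p = _
    rw [pd_swap hv1 (1, 0) (0, 1) p, s1]
  have hW2' : ∀ p, pd (0, 1) (v2 u) p
      = -(2 * v1 u p ^ 3 + 6 * u p * v1 u p * v2 u p + u p ^ 2 * v3 u p) - v5 u p :=
    fun p => (hswap2 p).trans (hW2 p)
  have hw_pt : ∀ p, w u p = -(u p ^ 2 * v1 u p) - v3 u p := fun p => by rw [hw_eq]
  intro p
  have e1 : pd (0, 1) (EnergyG u) p
      = (1 / 3 : ℝ) * u p ^ 3 * w u p + (1 / 2 : ℝ) * w u p * v2 u p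
        + (1 / 2 : ℝ) * u p * pd (0, 1) (v2 u) p := by
    unfold EnergyG
    simp (disch := fun_prop) only [pd_add, pd_mul, pd_pow, pd_const_mul, pd_const]
    simp only [v1, v2, v3, v4, v5, w]
    norm_num
    ring
  have e2 : pd (1, 0) (FluxF u) p
      = -((1 / 3 : ℝ) * u p ^ 5 * v1 u p) - (1 / 2 : ℝ) * v2 u p * v3 u p
        - (1 / 2 : ℝ) * u p * v5 u p - (7 / 2 : ℝ) * u p ^ 2 * v1 u p * v2 u p
        - (5 / 6 : ℝ) * u p ^ 3 * v3 u p - u p * v1 u p ^ 3 := by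
    unfold FluxF
    simp (disch := fun_prop) only [pd_add, pd_sub, pd_neg, pd_mul, pd_pow, pd_const_mul, pd_const]
    simp only [v1, v2, v3, v4, v5, w]
    norm_num
    ring
  rw [e1, e2, hW2' p, hw_pt p]
  ring

end Main


end MKdVAux

open MKdVAux MeasureTheory Set

/-- Global energy conservation: for a smooth `L`-periodic (in space) solution of the
mKdV equation `u_t + u²u_x + u_xxx = 0`, the global energy
`t ↦ ∫₀ᴸ (u⁴/12 + (1/2)·u·u_xx) dx` is constant. -/
theorem mkdv_global_energy_conserved (u : ℝ × ℝ → ℝ) (hu : ContDiff ℝ (⊤ : ℕ∞) u)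
    (L : ℝ) (hL : 0 < L)
    (hper : ∀ x t : ℝ, u (x + L, t) = u (x, t))
    (hsol : ∀ x t : ℝ, ut u x t + (u (x, t)) ^ 2 * ux u x t + uxxx u x t = 0) :
    ∀ t₁ t₂ : ℝ,
      (∫ x in (0:ℝ)..L, ((u (x, t₁)) ^ 4 / 12 + (1 / 2) * u (x, t₁) * uxx u x t₁))
        = ∫ x in (0:ℝ)..L, ((u (x, t₂)) ^ 4 / 12 + (1 / 2) * u (x, t₂) * uxx u x t₂) := by
  intro t₁ t₂
  have hud : Differentiable ℝ u := hu.differentiable (by simp)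
  have hv1 : ContDiff ℝ (⊤ : ℕ∞) (v1 u) := contDiff_pd _ hu
  have hv2 : ContDiff ℝ (⊤ : ℕ∞) (v2 u) := contDiff_pd _ hv1
  have hv3 : ContDiff ℝ (⊤ : ℕ∞) (v3 u) := contDiff_pd _ hv2
  have hv4 : ContDiff ℝ (⊤ : ℕ∞) (v4 u) := contDiff_pd _ hv3
  have hd1 : Differentiable ℝ (v1 u) := hv1.differentiable (by simp)
  have hd2 : Differentiable ℝ (v2 u) := hv2.differentiable (by simp)
  have hd3 : Differentiable ℝ (v3 u) := hv3.differentiable (by simp)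
  -- identification of the slice derivatives
  have hux : ∀ x t, ux u x t = v1 u (x, t) := fun x t => deriv_slice_x hud x t
  have huxx : ∀ x t, uxx u x t = v2 u (x, t) := by
    intro x t
    have h : (fun y => ux u y t) = fun y => v1 u (y, t) := funext fun y => hux y t
    rw [uxx, h, deriv_slice_x hd1]
    rfl
  have huxxx : ∀ x t, uxxx u x t = v3 u (x, t) := by
    intro x t
    have h : (fun y => uxx u y t) = fun y => v2 u (y, t) := funext fun y => huxx y t
    rw [uxxx, h, deriv_slice_x hd2]
    rfl
  have hut : ∀ x t, ut u x t = w u (x, t) := fun x t => deriv_slice_t hud x t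
  -- the PDE
  have hw_eq : w u = fun p => -(u p ^ 2 * v1 u p) - v3 u p := by
    funext p
    obtain ⟨x, t⟩ := p
    have h := hsol x t
    rw [hut, hux, huxxx] at h
    linarith
  -- smoothness of energy density and flux
  have hG : ContDiff ℝ (⊤ : ℕ∞) (EnergyG u) := by unfold EnergyG; fun_prop
  have hF : ContDiff ℝ (⊤ : ℕ∞) (FluxF u) := by unfold FluxF; fun_prop
  have hGd : Differentiable ℝ (EnergyG u) := hG.differentiable (by simp)
  have hgE : Continuous (pd (0, 1) (EnergyG u)) := (contDiff_pd _ hG).continuous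
  have hfF : Continuous (pd (1, 0) (FluxF u)) := (contDiff_pd _ hF).continuous
  have key := key_calc hu hw_eq
  -- periodicity
  have hperu : ∀ p : ℝ × ℝ, u (p + (L, 0)) = u p := by
    rintro ⟨x, t⟩
    show u (x + L, t + 0) = u (x, t)
    rw [add_zero, hper]
  have hperv1 : ∀ p, v1 u (p + (L, 0)) = v1 u p := pd_periodic _ hud hperu
  have hperv2 : ∀ p, v2 u (p + (L, 0)) = v2 u p := pd_periodic _ hd1 hperv1
  have hperv3 : ∀ p, v3 u (p + (L, 0)) = v3 u p := pd_periodic _ hd2 hperv2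
  have hperv4 : ∀ p, v4 u (p + (L, 0)) = v4 u p := pd_periodic _ hd3 hperv3
  have hFper : ∀ p : ℝ × ℝ, FluxF u (p + (L, 0)) = FluxF u p := by
    intro p
    unfold FluxF
    rw [hperu p, hperv1 p, hperv2 p, hperv3 p, hperv4 p]
  -- the inner space integral of the time-derivative vanishes
  have inner0 : ∀ s : ℝ, (∫ x in (0:ℝ)..L, pd (0, 1) (EnergyG u) (x, s)) = 0 := by
    intro s
    have hFd : Differentiable ℝ (FluxF u) := hF.differentiable (by simp)
    have h1 : (∫ x in (0:ℝ)..L, pd (0, 1) (EnergyG u) (x, s))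
        = FluxF u (L, s) - FluxF u (0, s) := by
      apply intervalIntegral.integral_eq_sub_of_hasDerivAt
      · intro x _
        have h := hasDerivAt_slice_x hFd x s
        rw [show pd (0, 1) (EnergyG u) (x, s) = pd (1, 0) (FluxF u) (x, s) from key (x, s)]
        exact h
      · have hc : Continuous fun x : ℝ => pd (0, 1) (EnergyG u) (x, s) :=
          hgE.comp (continuous_id.prodMk continuous_const)
        exact hc.intervalIntegrable 0 L
    rw [h1]
    have h2 : ((0:ℝ), s) + (L, 0) = ((L:ℝ), s) := by
      show ((0:ℝ) + L, s + 0) = (L, s)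
      rw [zero_add, add_zero]
    have := hFper (0, s)
    rw [h2] at this
    rw [this, sub_self]
  -- Fubini-type claim
  have claim : ∀ a b : ℝ, a ≤ b →
      (∫ x in (0:ℝ)..L, ∫ s in a..b, pd (0, 1) (EnergyG u) (x, s)) = 0 := by
    intro a b hab
    rw [intervalIntegral.integral_of_le hL.le]
    have hrw : ∀ x : ℝ, (∫ s in a..b, pd (0, 1) (EnergyG u) (x, s))
        = ∫ s in Ioc a b, pd (0, 1) (EnergyG u) (x, s) := fun x =>
      intervalIntegral.integral_of_le hab
    simp only [hrw]
    have hint : Integrable (Function.uncurry fun x s => pd (0, 1) (EnergyG u) (x, s))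
        ((volume.restrict (Ioc 0 L)).prod (volume.restrict (Ioc a b))) := by
      have hun : (Function.uncurry fun x s => pd (0, 1) (EnergyG u) (x, s))
          = pd (0, 1) (EnergyG u) := by
        funext p
        rfl
      rw [hun, Measure.prod_restrict, ← Measure.volume_eq_prod]
      exact (hgE.continuousOn.integrableOn_compact
        (isCompact_Icc.prod isCompact_Icc)).mono_set
        (prod_mono Ioc_subset_Icc_self Ioc_subset_Icc_self)
    rw [MeasureTheory.integral_integral_swap hint]
    have h0 : ∀ s : ℝ, (∫ x in Ioc (0:ℝ) L, pd (0, 1) (EnergyG u) (x, s)) = 0 := by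
      intro s
      rw [← intervalIntegral.integral_of_le hL.le]
      exact inner0 s
    simp only [h0, integral_zero]
  -- fundamental theorem of calculus in time
  have hFTC : ∀ x : ℝ, EnergyG u (x, t₂) - EnergyG u (x, t₁)
      = ∫ s in t₁..t₂, pd (0, 1) (EnergyG u) (x, s) := by
    intro x
    have hc : Continuous fun s : ℝ => pd (0, 1) (EnergyG u) (x, s) :=
      hgE.comp (continuous_const.prodMk continuous_id)
    exact (intervalIntegral.integral_eq_sub_of_hasDerivAt
      (fun s _ => hasDerivAt_slice_t hGd x s) (hc.intervalIntegrable t₁ t₂)).symm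
  have main : (∫ x in (0:ℝ)..L, (EnergyG u (x, t₂) - EnergyG u (x, t₁))) = 0 := by
    calc (∫ x in (0:ℝ)..L, (EnergyG u (x, t₂) - EnergyG u (x, t₁)))
        = ∫ x in (0:ℝ)..L, ∫ s in t₁..t₂, pd (0, 1) (EnergyG u) (x, s) := by
          simp only [hFTC]
      _ = 0 := by
          rcases le_total t₁ t₂ with h | h
          · exact claim t₁ t₂ h
          · have hsym : ∀ x : ℝ, (∫ s in t₁..t₂, pd (0, 1) (EnergyG u) (x, s))
                = -∫ s in t₂..t₁, pd (0, 1) (EnergyG u) (x, s) := fun x =>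
              intervalIntegral.integral_symm t₂ t₁
            simp only [hsym]
            rw [intervalIntegral.integral_neg, claim t₂ t₁ h, neg_zero]
  -- conclude
  have hGslice : ∀ t : ℝ, (fun x => (u (x, t)) ^ 4 / 12 + (1 / 2) * u (x, t) * uxx u x t)
      = fun x => EnergyG u (x, t) := by
    intro t
    funext x
    rw [huxx x t]
    unfold EnergyG
    ring
  rw [hGslice t₁, hGslice t₂]
  have hint : ∀ t : ℝ, IntervalIntegrable (fun x => EnergyG u (x, t)) volume 0 L := by
    intro t
    have hc : Continuous fun x : ℝ => EnergyG u (x, t) :=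
      hG.continuous.comp (continuous_id.prodMk continuous_const)
    exact hc.intervalIntegrable 0 L
  have hsub := intervalIntegral.integral_sub (hint t₂) (hint t₁)
  rw [hsub] at main
  linarith
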